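/- Using coe_2 and homogeneous path types, the 'diagonal collapse' operation dc with dc(i,j,left) ≡ i, dc(i,j,right) ≡ j, dc(i,i,k) ≡ i is definable by dc(i,j,k) = at(coe_2(λx. i ⇝ x, i, refl(i), j), k), provided coe_2 satisfies β_2 (coe_2(λx.D, i, d, i) ≡ d); conversely, from dc and coe_0 one recovers coe_2 with β_2 via coe_2(λx.D, i, d, j) = coe_0(λx. D[x := dc(i,j,x)], d). -/

import Mathlib

/-- A (shallow) model of a type theory with an interval type `I` (endpoints `lf`, `rt`),
the connection `sq`, heterogeneous path types `Path` and coercion `coe1`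
(`coe0` is the special case transporting from `lf` to `rt`). -/
structure CTT where
  Ty : Type
  Tm : Ty → Type
  I : Ty
  lf : Tm I
  rt : Tm I
  sq : Tm I → Tm I → Tm I
  sq_il : ∀ i, sq i lf = lf
  sq_lj : ∀ j, sq lf j = lf
  sq_rj : ∀ j, sq rt j = j
  Path : (A : Tm I → Ty) → Tm (A lf) → Tm (A rt) → Ty
  path : {A : Tm I → Ty} → (f : ∀ i, Tm (A i)) → Tm (Path A (f lf) (f rt))
  pat : {A : Tm I → Ty} → {a : Tm (A lf)} → {a' : Tm (A rt)} →
      Tm (Path A a a') → (i : Tm I) → Tm (A i)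
  pat_beta : ∀ {A : Tm I → Ty} (f : ∀ i, Tm (A i)) (i : Tm I), pat (path f) i = f i
  pat_lf : ∀ {A : Tm I → Ty} {a : Tm (A lf)} {a' : Tm (A rt)} (p : Tm (Path A a a')),
      pat p lf = a
  pat_rt : ∀ {A : Tm I → Ty} {a : Tm (A lf)} {a' : Tm (A rt)} (p : Tm (Path A a a')),
      pat p rt = a'
  path_eta : ∀ {A : Tm I → Ty} {a : Tm (A lf)} {a' : Tm (A rt)} (p : Tm (Path A a a')),
      HEq (path (fun i => pat p i)) p
  coe1 : (D : Tm I → Ty) → Tm (D lf) → (i : Tm I) → Tm (D i)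
  coe1_lf : ∀ D d, coe1 D d lf = d

namespace CTT

variable (M : CTT)

/-- Homogeneous path types `a ⇝ a'`. -/
def HP (A : M.Ty) (a a' : M.Tm A) : M.Ty := M.Path (fun _ => A) a a'

/-- `refl`. -/
def rfl' {A : M.Ty} (a : M.Tm A) : M.Tm (M.HP A a a) := M.path (fun _ => a)

/-- Coercion from the fiber over `left` to the fiber over `right`. -/
def coe0 (D : M.Tm M.I → M.Ty) (d : M.Tm (D M.lf)) : M.Tm (D M.rt) := M.coe1 D d M.rt

/-- Concatenation of homogeneous paths. -/
def conc {A : M.Ty} {a b c : M.Tm A} (p : M.Tm (M.HP A a b)) (q : M.Tm (M.HP A b c)) :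
    M.Tm (M.HP A a c) :=
  cast (show M.Tm (M.HP A a (M.pat q M.rt)) = M.Tm (M.HP A a c) by
      exact congrArg (fun x => M.Tm (M.HP A a x)) (M.pat_rt (A := fun _ => A) q))
    (M.coe1 (fun i => M.HP A a (M.pat q i))
      (cast (show M.Tm (M.HP A a b) = M.Tm (M.HP A a (M.pat q M.lf)) by
        exact (congrArg (fun x => M.Tm (M.HP A a x)) (M.pat_lf (A := fun _ => A) q)).symm) p) M.rt)

/-- Inversion of homogeneous paths. -/
def symm' {A : M.Ty} {a b : M.Tm A} (p : M.Tm (M.HP A a b)) : M.Tm (M.HP A b a) :=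
  cast (show M.Tm (M.HP A (M.pat p M.rt) a) = M.Tm (M.HP A b a) by
      exact congrArg (fun x => M.Tm (M.HP A x a)) (M.pat_rt (A := fun _ => A) p))
    (M.coe1 (fun i => M.HP A (M.pat p i) a)
      (cast (show M.Tm (M.HP A a a) = M.Tm (M.HP A (M.pat p M.lf) a) by
          exact (congrArg (fun x => M.Tm (M.HP A x a)) (M.pat_lf (A := fun _ => A) p)).symm)
        (M.rfl' a)) M.rt)

/-- Action of a function on paths. -/
def apm {A B : M.Ty} (g : M.Tm A → M.Tm B) {a a' : M.Tm A} (p : M.Tm (M.HP A a a')) :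
    M.Tm (M.HP B (g a) (g a')) :=
  cast (show M.Tm (M.HP B (g (M.pat p M.lf)) (g (M.pat p M.rt))) = M.Tm (M.HP B (g a) (g a'))
      by exact congr_arg₂ (fun x y => M.Tm (M.HP B (g x) (g y)))
          (M.pat_lf (A := fun _ => A) p) (M.pat_rt (A := fun _ => A) p))
    (M.path (fun i => g (M.pat p i)))

end CTT

/-- The "diagonal collapse" operation defined from `coe₂` and homogeneous path types:
`dc(i,j,k) := at(coe₂(λx. i ⇝ x, i, refl(i), j), k)`. -/
def dcDef (M : CTT)
    (coe2 : (D : M.Tm M.I → M.Ty) → (i : M.Tm M.I) → M.Tm (D i) → (j : M.Tm M.I) → M.Tm (D j))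
    (i j k : M.Tm M.I) : M.Tm M.I :=
  M.pat (coe2 (fun x => M.HP M.I i x) i (M.rfl' i) j) k

/-! The path `coe₂(λx. i ⇝ x, i, refl(i), j)` runs from `i` to `j`, so `dc` has the right
endpoints for free; on the diagonal `β₂` collapses it to `refl(i)`. Conversely, on the diagonal
the family `λx. D (dc i i x)` is constant, so `coe₀` along it is the identity by `σ`. -/

section DiagonalCollapseOfCoe2

variable (M : CTT)
  (coe2 : (D : M.Tm M.I → M.Ty) → (i : M.Tm M.I) → M.Tm (D i) → (j : M.Tm M.I) → M.Tm (D j))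

theorem dcDef_lf (i j : M.Tm M.I) : dcDef M coe2 i j M.lf = i :=
  M.pat_lf _

theorem dcDef_rt (i j : M.Tm M.I) : dcDef M coe2 i j M.rt = j :=
  M.pat_rt _

theorem dcDef_diag (hβ2 : ∀ D i d, coe2 D i d i = d) (i k : M.Tm M.I) :
    dcDef M coe2 i i k = i := by
  rw [dcDef, hβ2]
  exact M.pat_beta (fun _ => i) k

end DiagonalCollapseOfCoe2

namespace CTT

variable (M : CTT)

theorem coe0_heq_self_of_eq_const (hσ : ∀ (A : M.Ty) (a : M.Tm A), M.coe0 (fun _ => A) a = a)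
    {F : M.Tm M.I → M.Ty} {A : M.Ty} (hF : F = fun _ => A) (a : M.Tm (F M.lf)) :
    HEq (M.coe0 F a) a := by
  subst hF
  rw [hσ]

section CoeTwoOfDc

variable (dc : M.Tm M.I → M.Tm M.I → M.Tm M.I → M.Tm M.I)
  (hdl : ∀ i j, dc i j M.lf = i) (hdr : ∀ i j, dc i j M.rt = j)

def coe2OfDc (D : M.Tm M.I → M.Ty) (i : M.Tm M.I) (d : M.Tm (D i)) (j : M.Tm M.I) :
    M.Tm (D j) :=
  cast (by rw [hdr]) (M.coe0 (fun x => D (dc i j x)) (cast (by rw [hdl]) d))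

theorem coe2OfDc_heq (D : M.Tm M.I → M.Ty) (i : M.Tm M.I) (d : M.Tm (D i)) (j : M.Tm M.I) :
    HEq (M.coe2OfDc dc hdl hdr D i d j)
      (M.coe0 (fun x => D (dc i j x)) (cast (show M.Tm (D i) = M.Tm (D (dc i j M.lf)) by
        rw [hdl]) d)) :=
  cast_heq _ _

theorem coe2OfDc_self (hdd : ∀ i k, dc i i k = i)
    (hσ : ∀ (A : M.Ty) (a : M.Tm A), M.coe0 (fun _ => A) a = a)
    (D : M.Tm M.I → M.Ty) (i : M.Tm M.I) (d : M.Tm (D i)) :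
    M.coe2OfDc dc hdl hdr D i d i = d := by
  have hconst : (fun x => D (dc i i x)) = fun _ => D i := funext fun x => by rw [hdd]
  exact eq_of_heq <| (coe2OfDc_heq M dc hdl hdr D i d i).trans <|
    (M.coe0_heq_self_of_eq_const hσ hconst _).trans (cast_heq _ _)

end CoeTwoOfDc

end CTT

/-- Using `coe₂` and homogeneous path types, the diagonal collapse
operation `dc` with `dc(i,j,left) ≡ i`, `dc(i,j,right) ≡ j`, `dc(i,i,k) ≡ i` is definable
by `dc(i,j,k) = at(coe₂(λx. i ⇝ x, i, refl(i), j), k)`, provided `coe₂` satisfies `β₂`;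
conversely, from `dc` and `coe₀ + σ` one recovers `coe₂` with `β₂` via
`coe₂(λx.D, i, d, j) = coe₀(λx. D[x := dc(i,j,x)], d)`. -/
theorem stmt19 (M : CTT)
    (coe2 : (D : M.Tm M.I → M.Ty) → (i : M.Tm M.I) → M.Tm (D i) → (j : M.Tm M.I) → M.Tm (D j))
    (hβ2 : ∀ D i d, coe2 D i d i = d) :
    ((∀ i j, dcDef M coe2 i j M.lf = i) ∧
     (∀ i j, dcDef M coe2 i j M.rt = j) ∧
     (∀ i k, dcDef M coe2 i i k = i)) ∧
    (∀ dc : M.Tm M.I → M.Tm M.I → M.Tm M.I → M.Tm M.I,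
      (hdl : ∀ i j, dc i j M.lf = i) → (∀ i j, dc i j M.rt = j) → (∀ i k, dc i i k = i) →
      (∀ (A : M.Ty) (a : M.Tm A), M.coe0 (fun _ => A) a = a) →
      ∃ c2 : (D : M.Tm M.I → M.Ty) → (i : M.Tm M.I) → M.Tm (D i) → (j : M.Tm M.I) → M.Tm (D j),
        (∀ D i d, c2 D i d i = d) ∧
        (∀ (D : M.Tm M.I → M.Ty) (i : M.Tm M.I) (d : M.Tm (D i)) (j : M.Tm M.I),
          HEq (c2 D i d j)
            (M.coe0 (fun x => D (dc i j x))
              (cast (show M.Tm (D i) = M.Tm (D (dc i j M.lf)) by rw [hdl]) d)))) :=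
  ⟨⟨dcDef_lf M coe2, dcDef_rt M coe2, dcDef_diag M coe2 hβ2⟩,
    fun dc hdl hdr hdd hσ =>
      ⟨M.coe2OfDc dc hdl hdr, M.coe2OfDc_self dc hdl hdr hdd hσ, M.coe2OfDc_heq dc hdl hdr⟩⟩
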